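/- arXiv:2203.05746 — 2 statements merged into one kernel-verified Lean document; each statement's English description precedes it below -/
import Mathlib

section
/- Let Γ be a finite simplicial labeled graph, let v be a vertex, let U be the set of neighbors of v, and let Γ₁ = Γ \ {v}, Γ_U the full subgraph on U, and Γ_v the full subgraph on U ∪ {v}. Then A_Γ is the amalgamated free product A_{Γ₁} ∗_{A_{Γ_U}} A_{Γ_v}. -/
def wordBall {G : Type*} [Group G] (S : Set G) (R : ℕ) (g : G) : Set G :=
  {h | ∃ w : List G, w.length ≤ R ∧ (∀ x ∈ w, x ∈ S ∨ x⁻¹ ∈ S) ∧ h = g * w.prod}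

def AsdimLE (G : Type*) [Group G] (n : ℕ) : Prop :=
  ∀ S : Finset G, Subgroup.closure (S : Set G) = ⊤ →
    ∀ R : ℕ, ∃ 𝒰 : Set (Set G), ⋃₀ 𝒰 = Set.univ ∧
      (∃ B : ℕ, ∀ U ∈ 𝒰, ∀ x ∈ U, ∀ y ∈ U, y ∈ wordBall (S : Set G) B x) ∧
      ∀ g : G, {U ∈ 𝒰 | (wordBall (S : Set G) R g ∩ U).Nonempty}.Finite ∧
        Nat.card {U ∈ 𝒰 | (wordBall (S : Set G) R g ∩ U).Nonempty} ≤ n + 1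

noncomputable def asdim (G : Type*) [Group G] : ℕ∞ :=
  sInf ((↑) '' {n : ℕ | AsdimLE G n})

structure LabeledGraph (V : Type*) where
  graph : SimpleGraph V
  label : V → V → ℕ
  label_symm : ∀ a b, label a b = label b a
  two_le_label : ∀ a b, graph.Adj a b → 2 ≤ label a b

/-- The alternating product `xyxy⋯` of length `m`. -/
def braidProd {M : Type*} [Monoid M] (m : ℕ) (x y : M) : M :=
  ((List.range m).map (fun i => if i % 2 = 0 then x else y)).prod

lemma map_braidProd {M N : Type*} [Monoid M] [Monoid N] (φ : M →* N) (m : ℕ) (x y : M) :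
    φ (braidProd m x y) = braidProd m (φ x) (φ y) := by
  unfold braidProd
  rw [map_list_prod, List.map_map]
  simp [Function.comp_def, apply_ite φ]

/-- The alternating word `abab⋯` of length `m` in the free group. -/
def braidWord {V : Type*} (m : ℕ) (a b : V) : FreeGroup V :=
  braidProd m (FreeGroup.of a) (FreeGroup.of b)

def artinRels {V : Type*} (Γ : LabeledGraph V) : Set (FreeGroup V) :=
  {r | ∃ a b, Γ.graph.Adj a b ∧
    r = braidWord (Γ.label a b) a b * (braidWord (Γ.label a b) b a)⁻¹}

abbrev ArtinGroup {V : Type*} (Γ : LabeledGraph V) : Type _ :=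
  PresentedGroup (artinRels Γ)

def coxeterRels {V : Type*} (Γ : LabeledGraph V) : Set (FreeGroup V) :=
  artinRels Γ ∪ {r | ∃ a : V, r = FreeGroup.of a * FreeGroup.of a}

abbrev CoxeterGroupOf {V : Type*} (Γ : LabeledGraph V) : Type _ :=
  PresentedGroup (coxeterRels Γ)

def LabeledGraph.induce {V : Type*} (Γ : LabeledGraph V) (s : Set V) : LabeledGraph s where
  graph := SimpleGraph.induce s Γ.graph
  label := fun a b => Γ.label a b
  label_symm := fun a b => Γ.label_symm a b
  two_le_label := fun a b h => Γ.two_le_label a b (by simpa using h)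

lemma PresentedGroup.mk_rel_eq_one {α : Type*} {rels : Set (FreeGroup α)} {r : FreeGroup α}
    (h : r ∈ rels) : PresentedGroup.mk rels r = 1 :=
  (QuotientGroup.eq_one_iff _).2 (Subgroup.subset_normalClosure h)

section maps
variable {V : Type*} (Γ : LabeledGraph V)

lemma lift_braidWord {α G : Type*} [Group G] (f : α → G) (m : ℕ) (a b : α) :
    FreeGroup.lift f (braidWord m a b) = braidProd m (f a) (f b) := by
  rw [braidWord, map_braidProd]
  simp

/-- The homomorphism from the Artin group of a full subgraph to the ambient Artin group. -/
def artinIncl (s : Set V) : ArtinGroup (Γ.induce s) →* ArtinGroup Γ :=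
  PresentedGroup.toGroup (f := fun a : s => (PresentedGroup.of (a : V) : ArtinGroup Γ)) (by
    rintro r ⟨a, b, hab, rfl⟩
    have key : ∀ (c d : s) (m : ℕ),
        FreeGroup.lift (fun a : s => (PresentedGroup.of (a : V) : ArtinGroup Γ)) (braidWord m c d)
          = PresentedGroup.mk (artinRels Γ) (braidWord m (c : V) (d : V)) := by
      intro c d m
      rw [lift_braidWord, braidWord, map_braidProd]
      rfl
    rw [map_mul, map_inv, key, key, ← map_inv, ← map_mul]
    exact PresentedGroup.mk_rel_eq_one ⟨a, b, hab, rfl⟩)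

@[simp] lemma artinIncl_of (s : Set V) (a : s) :
    artinIncl Γ s (PresentedGroup.of a) = PresentedGroup.of (a : V) :=
  PresentedGroup.toGroup.of _

/-- The homomorphism between Artin groups of nested full subgraphs. -/
def artinMap {s t : Set V} (h : s ⊆ t) :
    ArtinGroup (Γ.induce s) →* ArtinGroup (Γ.induce t) :=
  PresentedGroup.toGroup
    (f := fun a : s => (PresentedGroup.of ⟨(a : V), h a.2⟩ : ArtinGroup (Γ.induce t))) (by
    rintro r ⟨a, b, hab, rfl⟩
    have key : ∀ (c d : s) (m : ℕ),
        FreeGroup.lift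
            (fun a : s => (PresentedGroup.of ⟨(a : V), h a.2⟩ : ArtinGroup (Γ.induce t)))
            (braidWord m c d)
          = PresentedGroup.mk (artinRels (Γ.induce t))
              (braidWord m (⟨(c : V), h c.2⟩ : t) ⟨(d : V), h d.2⟩) := by
      intro c d m
      rw [lift_braidWord, braidWord, map_braidProd]
      rfl
    rw [map_mul, map_inv, key, key, ← map_inv, ← map_mul]
    exact PresentedGroup.mk_rel_eq_one ⟨⟨a, h a.2⟩, ⟨b, h b.2⟩, hab, rfl⟩)

@[simp] lemma artinMap_of {s t : Set V} (h : s ⊆ t) (a : s) :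
    artinMap Γ h (PresentedGroup.of a) = PresentedGroup.of (⟨(a : V), h a.2⟩ : t) :=
  PresentedGroup.toGroup.of _

/-- The homomorphism from the Coxeter group of a full subgraph to the ambient Coxeter group. -/
def coxeterIncl (s : Set V) : CoxeterGroupOf (Γ.induce s) →* CoxeterGroupOf Γ :=
  PresentedGroup.toGroup (f := fun a : s => (PresentedGroup.of (a : V) : CoxeterGroupOf Γ)) (by
    rintro r (⟨a, b, hab, rfl⟩ | ⟨a, rfl⟩)
    · have key : ∀ (c d : s) (m : ℕ),
          FreeGroup.lift (fun a : s => (PresentedGroup.of (a : V) : CoxeterGroupOf Γ))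
              (braidWord m c d)
            = PresentedGroup.mk (coxeterRels Γ) (braidWord m (c : V) (d : V)) := by
        intro c d m
        rw [lift_braidWord, braidWord, map_braidProd]
        rfl
      rw [map_mul, map_inv, key, key, ← map_inv, ← map_mul]
      exact PresentedGroup.mk_rel_eq_one (Or.inl ⟨a, b, hab, rfl⟩)
    · rw [map_mul]
      simp only [FreeGroup.lift_apply_of]
      show PresentedGroup.mk (coxeterRels Γ) (FreeGroup.of (a : V)) *
        PresentedGroup.mk (coxeterRels Γ) (FreeGroup.of (a : V)) = 1
      rw [← map_mul]
      exact PresentedGroup.mk_rel_eq_one (Or.inr ⟨a, rfl⟩))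

/-- The homomorphism between Coxeter groups of nested full subgraphs. -/
def coxeterMap {s t : Set V} (h : s ⊆ t) :
    CoxeterGroupOf (Γ.induce s) →* CoxeterGroupOf (Γ.induce t) :=
  PresentedGroup.toGroup
    (f := fun a : s => (PresentedGroup.of ⟨(a : V), h a.2⟩ : CoxeterGroupOf (Γ.induce t))) (by
    rintro r (⟨a, b, hab, rfl⟩ | ⟨a, rfl⟩)
    · have key : ∀ (c d : s) (m : ℕ),
          FreeGroup.lift
              (fun a : s => (PresentedGroup.of ⟨(a : V), h a.2⟩ : CoxeterGroupOf (Γ.induce t)))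
              (braidWord m c d)
            = PresentedGroup.mk (coxeterRels (Γ.induce t))
                (braidWord m (⟨(c : V), h c.2⟩ : t) ⟨(d : V), h d.2⟩) := by
        intro c d m
        rw [lift_braidWord, braidWord, map_braidProd]
        rfl
      rw [map_mul, map_inv, key, key, ← map_inv, ← map_mul]
      exact PresentedGroup.mk_rel_eq_one (Or.inl ⟨⟨a, h a.2⟩, ⟨b, h b.2⟩, hab, rfl⟩)
    · rw [map_mul]
      simp only [FreeGroup.lift_apply_of]
      show PresentedGroup.mk (coxeterRels (Γ.induce t)) (FreeGroup.of _) *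
        PresentedGroup.mk (coxeterRels (Γ.induce t)) (FreeGroup.of _) = 1
      rw [← map_mul]
      exact PresentedGroup.mk_rel_eq_one (Or.inr ⟨⟨a, h a.2⟩, rfl⟩))

end maps


lemma artin_rel_lift_eq_one {V : Type} (Γ : LabeledGraph V) (s : Set V) {K : Type} [Group K]
    (kk : ArtinGroup (Γ.induce s) →* K) (f : V → K) (a b : V) (ha : a ∈ s) (hb : b ∈ s)
    (hab : Γ.graph.Adj a b) (hfa : f a = kk (PresentedGroup.of ⟨a, ha⟩))
    (hfb : f b = kk (PresentedGroup.of ⟨b, hb⟩)) :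
    FreeGroup.lift f (braidWord (Γ.label a b) a b * (braidWord (Γ.label a b) b a)⁻¹) = 1 := by
  have h1 : ∀ (c d : s) (m : ℕ),
      braidProd m (kk (PresentedGroup.of c)) (kk (PresentedGroup.of d))
        = kk (PresentedGroup.mk (artinRels (Γ.induce s)) (braidWord m c d)) := by
    intro c d m
    rw [braidWord, map_braidProd, map_braidProd]
    rfl
  rw [map_mul, map_inv, lift_braidWord, lift_braidWord, hfa, hfb, h1, h1,
    ← map_inv, ← map_inv, ← map_mul, ← map_mul]
  have hmem : braidWord (Γ.label a b) (⟨a, ha⟩ : s) ⟨b, hb⟩ *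
      (braidWord (Γ.label a b) (⟨b, hb⟩ : s) ⟨a, ha⟩)⁻¹ ∈ artinRels (Γ.induce s) :=
    ⟨⟨a, ha⟩, ⟨b, hb⟩, hab, rfl⟩
  rw [PresentedGroup.mk_rel_eq_one hmem, map_one]

/-- `A_Γ` is the amalgamated free product `A_{Γ₁} ∗_{A_{Γ_U}} A_{Γ_v}`, where `v` is a
vertex, `U` its neighbor set, `Γ₁ = Γ ∖ {v}`, and `Γ_U`, `Γ_v` are the full subgraphs on
`U` and `U ∪ {v}`: the inclusions commute and satisfy the universal property of the
pushout. -/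
theorem artin_amalgam {V : Type} [Fintype V] (Γ : LabeledGraph V) (v : V)
    (hU : Γ.graph.neighborSet v ⊆ ({v}ᶜ : Set V)) :
    (artinIncl Γ ({v}ᶜ)).comp (artinMap Γ hU)
      = (artinIncl Γ (Γ.graph.neighborSet v ∪ {v})).comp
          (artinMap Γ (Set.subset_union_left)) ∧
    ∀ (K : Type) [Group K]
      (k₁ : ArtinGroup (Γ.induce ({v}ᶜ)) →* K)
      (k₂ : ArtinGroup (Γ.induce (Γ.graph.neighborSet v ∪ {v})) →* K),
      k₁.comp (artinMap Γ hU) = k₂.comp (artinMap Γ (Set.subset_union_left)) →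
      ∃! k : ArtinGroup Γ →* K,
        k.comp (artinIncl Γ ({v}ᶜ)) = k₁ ∧
        k.comp (artinIncl Γ (Γ.graph.neighborSet v ∪ {v})) = k₂ := by
  classical
  refine ⟨PresentedGroup.ext fun a => by
    simp only [MonoidHom.comp_apply, artinMap_of, artinIncl_of], ?_⟩
  intro K _ k₁ k₂ hcomp
  have hcompat : ∀ (a : V) (ha : a ∈ Γ.graph.neighborSet v),
      k₁ (PresentedGroup.of (⟨a, hU ha⟩ : ({v}ᶜ : Set V)))
        = k₂ (PresentedGroup.of (⟨a, Or.inl ha⟩ : (Γ.graph.neighborSet v ∪ {v} : Set V))) := by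
    intro a ha
    have := congrArg (fun φ => φ (PresentedGroup.of (⟨a, ha⟩ : (Γ.graph.neighborSet v : Set V)))) hcomp
    simpa using this
  let f : V → K := fun x =>
    if h : x = v then k₂ (PresentedGroup.of (⟨v, Or.inr rfl⟩ : (Γ.graph.neighborSet v ∪ {v} : Set V)))
    else k₁ (PresentedGroup.of (⟨x, h⟩ : ({v}ᶜ : Set V)))
  have hf1 : ∀ (x : V) (hx : x ≠ v),
      f x = k₁ (PresentedGroup.of (⟨x, hx⟩ : ({v}ᶜ : Set V))) := fun x hx => dif_neg hx
  have hf2 : ∀ (x : V) (hx : x ∈ Γ.graph.neighborSet v ∪ ({v} : Set V)),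
      f x = k₂ (PresentedGroup.of (⟨x, hx⟩ : (Γ.graph.neighborSet v ∪ {v} : Set V))) := by
    intro x hx
    by_cases h : x = v
    · subst h; simp [f]
    · rw [hf1 x h, hcompat x (hx.resolve_right h)]
  have hrels : ∀ r ∈ artinRels Γ, FreeGroup.lift f r = 1 := by
    rintro r ⟨a, b, hab, rfl⟩
    by_cases ha : a = v
    · have hbU : b ∈ Γ.graph.neighborSet v := ha ▸ hab
      exact artin_rel_lift_eq_one Γ (Γ.graph.neighborSet v ∪ {v}) k₂ f a b (Or.inr ha) (Or.inl hbU) hab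
        (hf2 a (Or.inr ha)) (hf2 b (Or.inl hbU))
    · by_cases hb : b = v
      · have haU : a ∈ Γ.graph.neighborSet v := hb ▸ hab.symm
        exact artin_rel_lift_eq_one Γ (Γ.graph.neighborSet v ∪ {v}) k₂ f a b (Or.inl haU) (Or.inr hb) hab
          (hf2 a (Or.inl haU)) (hf2 b (Or.inr hb))
      · exact artin_rel_lift_eq_one Γ ({v}ᶜ) k₁ f a b ha hb hab (hf1 a ha) (hf1 b hb)
  refine ⟨PresentedGroup.toGroup hrels, ⟨?_, ?_⟩, ?_⟩
  · apply PresentedGroup.ext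
    intro a
    simp only [MonoidHom.comp_apply, artinIncl_of, PresentedGroup.toGroup.of]
    rw [hf1 (a : V) a.2]
  · apply PresentedGroup.ext
    intro a
    simp only [MonoidHom.comp_apply, artinIncl_of, PresentedGroup.toGroup.of]
    rw [hf2 (a : V) a.2]
  · rintro k' ⟨h1, h2⟩
    apply PresentedGroup.ext
    intro x
    rw [PresentedGroup.toGroup.of]
    by_cases hx : x = v
    · have := congrArg (fun φ => φ (PresentedGroup.of
        (⟨x, Or.inr hx⟩ : (Γ.graph.neighborSet v ∪ {v} : Set V)))) h2
      simp only [MonoidHom.comp_apply, artinIncl_of] at this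
      rw [this, ← hf2 x (Or.inr hx)]
    · have := congrArg (fun φ => φ (PresentedGroup.of (⟨x, hx⟩ : ({v}ᶜ : Set V)))) h1
      simp only [MonoidHom.comp_apply, artinIncl_of] at this
      rw [this, ← hf1 x hx]
end

section
/- Let Γ be a finite simplicial labeled graph, let v be a vertex, let U be its neighbor set, and set Γ₁ = Γ \ {v}, Γ_U the full subgraph on U, Γ_v the full subgraph on U ∪ {v}. Then the Coxeter group W_Γ is the amalgamated free product W_{Γ₁} ∗_{W_{Γ_U}} W_{Γ_v}. -/
section amalg
variable {V : Type} {K : Type} [Group K]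

lemma braid_lift_eq_one (Γ : LabeledGraph V) (f : V → K)
    {s : Set V} (g : CoxeterGroupOf (Γ.induce s) →* K) {a b : V} (ha : a ∈ s) (hb : b ∈ s)
    (hfa : f a = g (PresentedGroup.of ⟨a, ha⟩)) (hfb : f b = g (PresentedGroup.of ⟨b, hb⟩))
    (hab : Γ.graph.Adj a b) :
    FreeGroup.lift f (braidWord (Γ.label a b) a b * (braidWord (Γ.label a b) b a)⁻¹) = 1 := by
  have key : ∀ (c d : V) (hc : c ∈ s) (hd : d ∈ s),
      f c = g (PresentedGroup.of ⟨c, hc⟩) → f d = g (PresentedGroup.of ⟨d, hd⟩) →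
      ∀ m : ℕ, FreeGroup.lift f (braidWord m c d)
        = g (PresentedGroup.mk (coxeterRels (Γ.induce s))
            (braidWord m (⟨c, hc⟩ : s) ⟨d, hd⟩)) := by
    intro c d hc hd hfc hfd m
    rw [lift_braidWord, hfc, hfd, braidWord, map_braidProd, map_braidProd]
    rfl
  rw [map_mul, map_inv, key a b ha hb hfa hfb, key b a hb ha hfb hfa, ← map_inv, ← map_mul,
    ← map_inv, ← map_mul]
  rw [show Γ.label a b = (Γ.induce s).label ⟨a, ha⟩ ⟨b, hb⟩ from rfl]
  rw [PresentedGroup.mk_rel_eq_one (Or.inl ⟨⟨a, ha⟩, ⟨b, hb⟩, hab, rfl⟩), map_one]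

lemma sq_lift_eq_one (Γ : LabeledGraph V) (f : V → K)
    {s : Set V} (g : CoxeterGroupOf (Γ.induce s) →* K) {a : V} (ha : a ∈ s)
    (hfa : f a = g (PresentedGroup.of ⟨a, ha⟩)) :
    FreeGroup.lift f (FreeGroup.of a * FreeGroup.of a) = 1 := by
  rw [map_mul, FreeGroup.lift_apply_of, hfa, ← map_mul]
  show g (PresentedGroup.mk (coxeterRels (Γ.induce s))
    (FreeGroup.of (⟨a, ha⟩ : s) * FreeGroup.of ⟨a, ha⟩)) = 1
  rw [PresentedGroup.mk_rel_eq_one (Or.inr ⟨⟨a, ha⟩, rfl⟩), map_one]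

end amalg


section amalg2
variable {V : Type} (Γ : LabeledGraph V)

@[simp] lemma coxeterIncl_of (s : Set V) (a : s) :
    coxeterIncl Γ s (PresentedGroup.of a) = PresentedGroup.of (a : V) :=
  PresentedGroup.toGroup.of _

@[simp] lemma coxeterMap_of {s t : Set V} (h : s ⊆ t) (a : s) :
    coxeterMap Γ h (PresentedGroup.of a) = PresentedGroup.of (⟨(a : V), h a.2⟩ : t) :=
  PresentedGroup.toGroup.of _

end amalg2

/-- `W_Γ` is the amalgamated free product `W_{Γ₁} ∗_{W_{Γ_U}} W_{Γ_v}`, where `v` is a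
vertex, `U` its neighbor set, `Γ₁ = Γ ∖ {v}`, and `Γ_U`, `Γ_v` are the full subgraphs on
`U` and `U ∪ {v}`: the inclusions commute and satisfy the universal property of the
pushout. -/
theorem coxeter_amalgam {V : Type} [Fintype V] (Γ : LabeledGraph V) (v : V)
    (hU : Γ.graph.neighborSet v ⊆ ({v}ᶜ : Set V)) :
    (coxeterIncl Γ ({v}ᶜ)).comp (coxeterMap Γ hU)
      = (coxeterIncl Γ (Γ.graph.neighborSet v ∪ {v})).comp
          (coxeterMap Γ (Set.subset_union_left)) ∧
    ∀ (K : Type) [Group K]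
      (k₁ : CoxeterGroupOf (Γ.induce ({v}ᶜ)) →* K)
      (k₂ : CoxeterGroupOf (Γ.induce (Γ.graph.neighborSet v ∪ {v})) →* K),
      k₁.comp (coxeterMap Γ hU) = k₂.comp (coxeterMap Γ (Set.subset_union_left)) →
      ∃! k : CoxeterGroupOf Γ →* K,
        k.comp (coxeterIncl Γ ({v}ᶜ)) = k₁ ∧
        k.comp (coxeterIncl Γ (Γ.graph.neighborSet v ∪ {v})) = k₂ := by
  classical
  constructor
  · apply PresentedGroup.ext
    intro a
    simp [MonoidHom.comp_apply]
  · intro K _ k₁ k₂ hk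
    have hvUv : v ∈ Γ.graph.neighborSet v ∪ {v} := Or.inr rfl
    have compat : ∀ (a : V) (ha : a ∈ Γ.graph.neighborSet v),
        k₁ (PresentedGroup.of ⟨a, hU ha⟩) = k₂ (PresentedGroup.of ⟨a, Or.inl ha⟩) := by
      intro a ha
      have := DFunLike.congr_fun hk (PresentedGroup.of (⟨a, ha⟩ : Γ.graph.neighborSet v))
      simpa [MonoidHom.comp_apply] using this
    set f : V → K := fun a =>
      if h : a = v then k₂ (PresentedGroup.of ⟨v, hvUv⟩)
      else k₁ (PresentedGroup.of ⟨a, h⟩) with hf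
    have hfv : f v = k₂ (PresentedGroup.of ⟨v, hvUv⟩) := by simp [hf]
    have hfne : ∀ (a : V) (h : a ≠ v), f a = k₁ (PresentedGroup.of ⟨a, h⟩) := by
      intro a h; simp [hf, h]
    have hfU : ∀ (a : V) (ha : a ∈ Γ.graph.neighborSet v ∪ {v}),
        f a = k₂ (PresentedGroup.of ⟨a, ha⟩) := by
      intro a ha
      rcases ha with ha | ha
      · have hav : a ≠ v := hU ha
        rw [hfne a hav, compat a ha]
      · rcases ha with rfl; exact hfv
    have hrels : ∀ r ∈ coxeterRels Γ, FreeGroup.lift f r = 1 := by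
      rintro r (⟨a, b, hab, rfl⟩ | ⟨a, rfl⟩)
      · by_cases ha : a = v
        · subst ha
          have hb : b ∈ Γ.graph.neighborSet a := hab
          exact braid_lift_eq_one Γ f k₂ hvUv (Or.inl hb) hfv (hfU b (Or.inl hb)) hab
        · by_cases hb : b = v
          · subst hb
            have ha' : a ∈ Γ.graph.neighborSet b := hab.symm
            exact braid_lift_eq_one Γ f k₂ (Or.inl ha') hvUv (hfU a (Or.inl ha')) hfv hab
          · exact braid_lift_eq_one Γ f k₁ ha hb (hfne a ha) (hfne b hb) hab
      · by_cases ha : a = v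
        · subst ha; exact sq_lift_eq_one Γ f k₂ hvUv hfv
        · exact sq_lift_eq_one Γ f k₁ ha (hfne a ha)
    refine ⟨PresentedGroup.toGroup hrels, ⟨?_, ?_⟩, ?_⟩
    · apply PresentedGroup.ext
      intro a
      simp only [MonoidHom.comp_apply, coxeterIncl_of, PresentedGroup.toGroup.of]
      rw [hfne a.1 a.2]
    · apply PresentedGroup.ext
      intro a
      simp only [MonoidHom.comp_apply, coxeterIncl_of, PresentedGroup.toGroup.of]
      rw [hfU a.1 a.2]
    · rintro k ⟨h1, h2⟩
      apply PresentedGroup.ext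
      intro a
      rw [PresentedGroup.toGroup.of]
      by_cases ha : a = v
      · subst ha
        rw [hfv, ← h2]
        simp [MonoidHom.comp_apply]
      · rw [hfne a ha, ← h1]
        simp [MonoidHom.comp_apply]
end
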